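/- The degree-zero Hopf–Hochschild cohomology of a $B$-module algebra $A$ with coefficients in a $B$-equivariant $A$-bimodule $V$ is $HH^0_{Hopf}(A,V) \cong ({}^BV)^{\mathrm{Lie}(A)} = \{v \in V : b(v)=\varepsilon(b)v \text{ for all } b\in B, \text{ and } av=va \text{ for all } a\in A\}$. -/

import Mathlib

/-!
A crossed homomorphism `f : A ⊗ A → V` is determined by `v = f (1 ⊗ 1)`, because
`x ⊗ y = x · (1 ⊗ 1) · y` in `A ⊗ A`. Since `b • 1 = ε(b) 1` in `A`, the generator `1 ⊗ 1` is
`B`-invariant, so equivariance forces `b • v = ε(b) v`; the cocycle condition at `1 ⊗ a ⊗ 1`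
reads `a v - v a = 0`. Conversely, such a `v` gives the crossed homomorphism `x ⊗ y ↦ (x y) v`,
which is a cocycle by associativity of `A`.
-/

open TensorProduct MulOpposite

noncomputable section

universe u
variable (k : Type u) [Field k]
variable (B A : Type u) [Ring B] [Bialgebra k B]
  [Ring A] [Algebra k A] [Module B A] [IsScalarTower k B A] [SMulCommClass B k A]

def IsModuleAlgebra : Prop :=
  (∀ (b : B) (a₁ a₂ : A) (n : ℕ) (x y : Fin n → B),
      Coalgebra.comul (R := k) b = ∑ i, x i ⊗ₜ[k] y i →
      b • (a₁ * a₂) = ∑ i, (x i • a₁) * (y i • a₂)) ∧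
  ∀ b : B, b • (1 : A) = Coalgebra.counit (R := k) b • (1 : A)

/-- Tensor powers of `A`: `Tpow n = A^{⊗(n+1)}`; the bar complex is `CB n = Tpow (n+1)`. -/
def Tpow : ℕ → ModuleCat k
  | 0 => ModuleCat.of k A
  | n+1 => ModuleCat.of k (A ⊗[k] (Tpow n))

/-- The bar face maps `∂ⱼ` (multiplication of adjacent factors) on `Tpow (n+1)`. -/
def barFace : (n : ℕ) → ℕ → (↥(Tpow k A (n+1)) →ₗ[k] ↥(Tpow k A n))
  | 0, _ => TensorProduct.lift (Algebra.lsmul k (A := A) k A).toLinearMap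
  | n+1, 0 => (TensorProduct.map (LinearMap.mul' k A) LinearMap.id) ∘ₗ
      (TensorProduct.assoc k A A ↥(Tpow k A n)).symm.toLinearMap
  | n+1, j+1 => LinearMap.lTensor A (barFace n j)

/-- Bar differential `d : CB_{n+1} = Tpow (n+2) → CB_n = Tpow (n+1)`. -/
def dCB (n : ℕ) : ↥(Tpow k A (n+2)) →ₗ[k] ↥(Tpow k A (n+1)) :=
  ∑ j ∈ Finset.range (n+2), ((-1 : k)^j) • barFace k A (n+1) j

/-- Left `A`-action (multiplication on the first factor). -/
def lmulFirst (n : ℕ) : A →ₗ[k] ↥(Tpow k A (n+1)) →ₗ[k] ↥(Tpow k A (n+1)) :=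
  (LinearMap.rTensorHom ↥(Tpow k A n)) ∘ₗ (Algebra.lsmul k (A := A) k A).toLinearMap

/-- Right `A`-action (multiplication on the last factor). -/
def rmulLast : (n : ℕ) → Aᵐᵒᵖ →ₗ[k] ↥(Tpow k A n) →ₗ[k] ↥(Tpow k A n)
  | 0 => (Algebra.lsmul k (A := Aᵐᵒᵖ) k A).toLinearMap
  | n+1 => (LinearMap.lTensorHom A) ∘ₗ (rmulLast n)

/-- Diagonal `B`-action on `Tpow n`. -/
def LmapBar : (n : ℕ) → B →ₗ[k] ↥(Tpow k A n) →ₗ[k] ↥(Tpow k A n)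
  | 0 => (Algebra.lsmul k (A := B) k A).toLinearMap
  | n+1 => (TensorProduct.lift
      ((((TensorProduct.mapBilinear (RingHom.id k) A ↥(Tpow k A n) A ↥(Tpow k A n)).comp
        ((Algebra.lsmul k (A := B) k A).toLinearMap)).compl₂ (LmapBar n)))) ∘ₗ
      (Coalgebra.comul (R := k) (A := B))


def crossAct (n : ℕ) (a a' : A) (b : B) (ξ : ↥(Tpow k A (n+1))) : ↥(Tpow k A (n+1)) :=
  lmulFirst k A n a (rmulLast k A (n+1) (op a') (LmapBar k B A (n+1) b ξ))

variable (V : Type u) [AddCommGroup V] [Module k V]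
  [Module A V] [IsScalarTower k A V] [SMulCommClass A k V]
  [Module Aᵐᵒᵖ V] [IsScalarTower k Aᵐᵒᵖ V] [SMulCommClass Aᵐᵒᵖ k V]
  [Module B V] [IsScalarTower k B V] [SMulCommClass B k V]

def IsEquivariantBimodule : Prop :=
  ∀ (b : B) (a : A) (v : V) (n : ℕ) (x y : Fin n → B),
      Coalgebra.comul (R := k) b = ∑ i, x i ⊗ₜ[k] y i →
      b • (a • v) = (∑ i, (x i • a) • ((y i) • v)) ∧
      b • (op a • v) = ∑ i, op (y i • a) • ((x i) • v)

/-- Generators `a₀ ⊗ ⋯ ⊗ aₙ` of `Tpow n = A^{⊗(n+1)}`. -/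
def genBar : (n : ℕ) → (Fin (n+1) → A) → ↥(Tpow k A n)
  | 0, a => a 0
  | n+1, a => (a 0 ⊗ₜ[k] genBar n (fun i => a i.succ) : A ⊗[k] ↥(Tpow k A n))

/-- `f ∈ Hom_{Aᵉ⋊B}(CB_n(A), V)`. -/
def IsCrossedHom (n : ℕ) (f : ↥(Tpow k A (n+1)) →ₗ[k] V) : Prop :=
  ∀ (a a' : A) (b : B) (ξ : ↥(Tpow k A (n+1))),
    f (crossAct k B A n a a' b ξ) = a • (op a' • (b • f ξ))

section Coalgebra

variable {R C : Type*} [CommSemiring R] [AddCommMonoid C] [Module R C] [Coalgebra R C]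
  {c : C} {n : ℕ} {x y : Fin n → C}

theorem Coalgebra.sum_counit_left_smul_of_comul_eq
    (hc : Coalgebra.comul (R := R) c = ∑ i, x i ⊗ₜ[R] y i) :
    ∑ i, Coalgebra.counit (R := R) (x i) • y i = c :=
  Coalgebra.sum_counit_smul ⟨Finset.univ, x, y, hc.symm⟩

theorem Coalgebra.sum_counit_right_smul_of_comul_eq
    (hc : Coalgebra.comul (R := R) c = ∑ i, x i ⊗ₜ[R] y i) :
    ∑ i, Coalgebra.counit (R := R) (y i) • x i = c := by
  simpa using congrArg (_root_.TensorProduct.rid R C)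
    (Coalgebra.sum_tmul_counit_eq (⟨Finset.univ, x, y, hc.symm⟩ : Coalgebra.Repr R c (Fin n)))

theorem Coalgebra.sum_counit_mul_counit_of_comul_eq
    (hc : Coalgebra.comul (R := R) c = ∑ i, x i ⊗ₜ[R] y i) :
    ∑ i, Coalgebra.counit (R := R) (x i) * Coalgebra.counit (R := R) (y i) =
      Coalgebra.counit (R := R) c := by
  simpa [map_sum] using
    congrArg (Coalgebra.counit (R := R)) (Coalgebra.sum_counit_left_smul_of_comul_eq hc)

end Coalgebra

local notation "𝟙⊗𝟙" => ((1 : A) ⊗ₜ[k] (1 : A) : A ⊗[k] A)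

section BarComplex

variable {k B A}

theorem barFace_zero_tmul (j : ℕ) (x y : A) : barFace k A 0 j (x ⊗ₜ[k] y) = x * y :=
  TensorProduct.lift.tmul x y

theorem dCB_zero_apply (ξ : Tpow k A 2) :
    dCB k A 0 ξ = barFace k A 1 0 ξ - barFace k A 1 1 ξ := by
  simp [dCB, Finset.sum_range_succ, sub_eq_add_neg]

theorem dCB_zero_tmul_tmul (x y z : A) :
    dCB k A 0 (x ⊗ₜ[k] (y ⊗ₜ[k] z)) = (x * y) ⊗ₜ[k] z - x ⊗ₜ[k] (y * z) :=
  (dCB_zero_apply _).trans <| congrArg ((x * y) ⊗ₜ[k] z - ·) <|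
    congrArg (x ⊗ₜ[k] ·) (barFace_zero_tmul 0 y z)

theorem dCB_zero_one_tmul_tmul_one (a : A) :
    dCB k A 0 ((1 : A) ⊗ₜ[k] (a ⊗ₜ[k] (1 : A)) : A ⊗[k] (A ⊗[k] A)) =
      (a ⊗ₜ[k] (1 : A) - (1 : A) ⊗ₜ[k] a : A ⊗[k] A) :=
  (dCB_zero_tmul_tmul 1 a 1).trans (by rw [one_mul, mul_one])

theorem mul'_comp_dCB_zero : LinearMap.mul' k A ∘ₗ dCB k A 0 = 0 :=
  TensorProduct.ext_threefold' (P := A) fun x y z => by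
    change LinearMap.mul' k A (dCB k A 0 (x ⊗ₜ[k] (y ⊗ₜ[k] z))) = 0
    erw [dCB_zero_tmul_tmul]
    simp [mul_assoc]

theorem mul'_smulRight_comp_dCB_zero {M : Type*} [AddCommGroup M] [Module k M] [Module A M]
    [IsScalarTower k A M] (m : M) : (LinearMap.mul' k A).smulRight m ∘ₗ dCB k A 0 = 0 :=
  LinearMap.ext fun ξ =>
    (congrArg (· • m) (LinearMap.congr_fun mul'_comp_dCB_zero ξ)).trans (zero_smul A m)

theorem LmapBar_one_tmul {b : B} {n : ℕ} {bx by' : Fin n → B}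
    (hb : Coalgebra.comul (R := k) b = ∑ i, bx i ⊗ₜ[k] by' i) (x y : A) :
    LmapBar k B A 1 b (x ⊗ₜ[k] y) = ∑ i, (bx i • x) ⊗ₜ[k] (by' i • y) := by
  simp only [LmapBar, LinearMap.comp_apply, hb, map_sum]
  erw [LinearMap.sum_apply]
  rfl

theorem crossAct_zero_tmul {b : B} {n : ℕ} {bx by' : Fin n → B}
    (hb : Coalgebra.comul (R := k) b = ∑ i, bx i ⊗ₜ[k] by' i) (a a' x y : A) :
    crossAct k B A 0 a a' b (x ⊗ₜ[k] y) = ∑ i, (a * (bx i • x)) ⊗ₜ[k] ((by' i • y) * a') := by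
  unfold crossAct
  erw [LmapBar_one_tmul hb, map_sum, map_sum]
  rfl

theorem crossAct_eq_comp_apply (n : ℕ) (a a' : A) (b : B) (ξ : Tpow k A (n + 1)) :
    crossAct k B A n a a' b ξ =
      (lmulFirst k A n a ∘ₗ rmulLast k A (n + 1) (op a') ∘ₗ LmapBar k B A (n + 1) b) ξ :=
  rfl

theorem crossAct_zero_one_tmul_one (x y : A) :
    crossAct k B A 0 x y 1 𝟙⊗𝟙 = (x ⊗ₜ[k] y : A ⊗[k] A) := by
  have hone : Coalgebra.comul (R := k) (1 : B) = ∑ _i : Fin 1, (1 : B) ⊗ₜ[k] (1 : B) := by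
    simp [Algebra.TensorProduct.one_def]
  exact (crossAct_zero_tmul hone x y 1 1).trans (by simp; rfl)

theorem crossAct_zero_one_one_tmul_one (hA : IsModuleAlgebra k B A) (b : B) :
    crossAct k B A 0 1 1 b 𝟙⊗𝟙 = Coalgebra.counit (R := k) b • 𝟙⊗𝟙 := by
  obtain ⟨n, bx, by', hb⟩ := TensorProduct.exists_sum_tmul_eq (Coalgebra.comul (R := k) b)
  refine (crossAct_zero_tmul hb 1 1 1 1).trans ?_
  simp only [one_mul, mul_one, hA.2, TensorProduct.smul_tmul_smul, ← Finset.sum_smul]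
  rw [Coalgebra.sum_counit_mul_counit_of_comul_eq hb]

end BarComplex

section CrossedHom

variable {k B A V}
omit [IsScalarTower k A V] [SMulCommClass A k V] [IsScalarTower k Aᵐᵒᵖ V]
  [SMulCommClass Aᵐᵒᵖ k V] [IsScalarTower k B V] [SMulCommClass B k V]

theorem IsCrossedHom.apply_tmul {f : Tpow k A 1 →ₗ[k] V} (hf : IsCrossedHom k B A V 0 f)
    (x y : A) : f (x ⊗ₜ[k] y : A ⊗[k] A) = x • op y • f 𝟙⊗𝟙 :=
  calc f (x ⊗ₜ[k] y : A ⊗[k] A)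
      = f (crossAct k B A 0 x y 1 𝟙⊗𝟙) := congrArg f (crossAct_zero_one_tmul_one x y).symm
    _ = x • op y • (1 : B) • f 𝟙⊗𝟙 := hf x y 1 _
    _ = _ := by rw [one_smul]

theorem IsCrossedHom.ext {f g : Tpow k A 1 →ₗ[k] V} (hf : IsCrossedHom k B A V 0 f)
    (hg : IsCrossedHom k B A V 0 g) (h : f 𝟙⊗𝟙 = g 𝟙⊗𝟙) : f = g :=
  TensorProduct.ext' (M := A) (N := A) fun x y =>
    (hf.apply_tmul x y).trans ((congrArg (x • op y • ·) h).trans (hg.apply_tmul x y).symm)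

theorem IsCrossedHom.smul_apply_one_tmul_one_eq_counit_smul (hA : IsModuleAlgebra k B A)
    {f : Tpow k A 1 →ₗ[k] V} (hf : IsCrossedHom k B A V 0 f) (b : B) :
    b • f 𝟙⊗𝟙 = Coalgebra.counit (R := k) b • f 𝟙⊗𝟙 :=
  calc b • f 𝟙⊗𝟙
      = (1 : A) • op (1 : A) • b • f 𝟙⊗𝟙 := by rw [op_one, one_smul, one_smul]
    _ = f (crossAct k B A 0 1 1 b 𝟙⊗𝟙) := (hf 1 1 b _).symm
    _ = f (Coalgebra.counit (R := k) b • 𝟙⊗𝟙) :=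
        congrArg f (crossAct_zero_one_one_tmul_one hA b)
    _ = _ := map_smul f _ _

theorem IsCrossedHom.smul_apply_one_tmul_one_eq_op_smul {f : Tpow k A 1 →ₗ[k] V}
    (hf : IsCrossedHom k B A V 0 f) (hd : f ∘ₗ dCB k A 0 = 0) (a : A) :
    a • f 𝟙⊗𝟙 = op a • f 𝟙⊗𝟙 := by
  have hcocycle : f (a ⊗ₜ[k] (1 : A) : A ⊗[k] A) - f ((1 : A) ⊗ₜ[k] a : A ⊗[k] A) = 0 :=
    (map_sub f _ _).symm.trans <| (congrArg f (dCB_zero_one_tmul_tmul_one a).symm).trans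
      (LinearMap.congr_fun hd ((1 : A) ⊗ₜ[k] (a ⊗ₜ[k] (1 : A)) : A ⊗[k] (A ⊗[k] A)))
  rw [sub_eq_zero, hf.apply_tmul a 1, hf.apply_tmul 1 a] at hcocycle
  simpa using hcocycle

theorem isCrossedHom_zero_of_forall_tmul {f : Tpow k A 1 →ₗ[k] V}
    (h : ∀ (a a' : A) (b : B) (x y : A), f (crossAct k B A 0 a a' b (x ⊗ₜ[k] y : A ⊗[k] A)) =
      a • op a' • b • f (x ⊗ₜ[k] y : A ⊗[k] A)) :
    IsCrossedHom k B A V 0 f := by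
  intro a a' b ξ
  induction ξ using TensorProduct.induction_on with
  | zero => erw [crossAct_eq_comp_apply, map_zero, map_zero, smul_zero, smul_zero, smul_zero]
  | tmul x y => exact h a a' b x y
  | add ξ η hξ hη =>
    erw [crossAct_eq_comp_apply, map_add, map_add, map_add, ← crossAct_eq_comp_apply,
      ← crossAct_eq_comp_apply, hξ, hη, smul_add, smul_add, smul_add]

theorem op_smul_smul_of_forall_smul_eq_op_smul {v : V} (hv : ∀ a : A, a • v = op a • v)
    (a c : A) : op a • c • v = (c * a) • v := by
  rw [hv c, ← mul_smul, ← op_mul, ← hv]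

omit [SMulCommClass B k A] in
theorem smul_smul_of_forall_smul_eq_counit_smul [IsScalarTower k A V] [SMulCommClass A k V]
    (hV : IsEquivariantBimodule k B A V) {v : V}
    (hv : ∀ b : B, b • v = Coalgebra.counit (R := k) b • v) (b : B) (c : A) :
    b • c • v = (b • c) • v := by
  obtain ⟨n, x, y, hb⟩ := TensorProduct.exists_sum_tmul_eq (Coalgebra.comul (R := k) b)
  calc b • c • v = ∑ i, (x i • c) • y i • v := (hV b c v n x y hb).1
    _ = ∑ i, (Coalgebra.counit (R := k) (y i) • x i • c) • v := by
        simp only [hv, smul_comm _ (Coalgebra.counit (R := k) _), smul_assoc]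
    _ = (b • c) • v := by
        rw [← Finset.sum_smul]
        simp only [← smul_assoc, ← Finset.sum_smul, Coalgebra.sum_counit_right_smul_of_comul_eq hb]

theorem isCrossedHom_mul'_smulRight [IsScalarTower k A V] [SMulCommClass A k V]
    (hA : IsModuleAlgebra k B A) (hV : IsEquivariantBimodule k B A V) {v : V}
    (hvB : ∀ b : B, b • v = Coalgebra.counit (R := k) b • v) (hvA : ∀ a : A, a • v = op a • v) :
    IsCrossedHom k B A V 0 ((LinearMap.mul' k A).smulRight v) := by
  refine isCrossedHom_zero_of_forall_tmul fun a a' b x y => ?_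
  obtain ⟨n, bx, by', hb⟩ := TensorProduct.exists_sum_tmul_eq (Coalgebra.comul (R := k) b)
  refine (congrArg ((LinearMap.mul' k A).smulRight v) (crossAct_zero_tmul hb a a' x y)).trans ?_
  calc (LinearMap.mul' k A).smulRight v (∑ i, (a * (bx i • x)) ⊗ₜ[k] ((by' i • y) * a'))
      = (a * (b • (x * y)) * a') • v := by
        simp only [map_sum, LinearMap.smulRight_apply, LinearMap.mul'_apply, ← Finset.sum_smul,
          hA.1 b x y n bx by' hb, Finset.mul_sum, Finset.sum_mul, mul_assoc]
    _ = a • op a' • b • (x * y) • v := by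
        rw [smul_smul_of_forall_smul_eq_counit_smul hV hvB,
          op_smul_smul_of_forall_smul_eq_op_smul hvA, smul_smul, mul_assoc]

end CrossedHom

/-- `HH⁰_{Hopf}(A,V) ≅ (ᴮV)^{Lie(A)}`: the kernel of the first differential of
`Hom_{Aᵉ⋊B}(CB_*(A),V)` is in bijection, via `f ↦ f(1⊗1)`, with
`{v ∈ V | b•v = ε(b)v for all b, and av = va for all a}`. -/
theorem hopfHochschild_H0 (hA : IsModuleAlgebra k B A)
    (hV : IsEquivariantBimodule k B A V) :
    Set.BijOn (fun f : ↥(Tpow k A 1) →ₗ[k] V => f (genBar k A 1 (fun _ => 1)))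
      {f | IsCrossedHom k B A V 0 f ∧ f ∘ₗ dCB k A 0 = 0}
      {v : V | (∀ b : B, b • v = Coalgebra.counit (R := k) b • v) ∧
               (∀ a : A, a • v = op a • v)} := by
  refine ⟨fun f ⟨hf, hd⟩ => ⟨hf.smul_apply_one_tmul_one_eq_counit_smul hA,
      hf.smul_apply_one_tmul_one_eq_op_smul hd⟩,
    fun f ⟨hf, _⟩ g ⟨hg, _⟩ hfg => hf.ext hg hfg,
    fun v ⟨hvB, hvA⟩ => ⟨_, ⟨isCrossedHom_mul'_smulRight hA hV hvB hvA,
      mul'_smulRight_comp_dCB_zero v⟩, ?_⟩⟩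
  change (1 * 1 : A) • v = v
  rw [one_mul, one_smul]

end
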